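/- Consider Algorithm 1 applied to the convex program min{f(x) : g_k(x) ≤ 0 ∀k ∈ {1,…,m}, x ∈ 𝒳} with parameter α ≥ β²/2, where β is the Lipschitz modulus of g on 𝒳, and let x* ∈ 𝒳 be an optimal solution of the program. Then for all t ≥ 1, the running average x̄(t) = (1/t)∑_{τ=0}^{t−1} x(τ) satisfies f(x̄(t)) ≤ f(x*) + (α/t)‖x* − x(−1)‖². -/

import Mathlib

/-!
Write `y t = x(t - 1)` and `w = Q(t) + g(y t)`. The update of `Q` keeps `w` componentwise
nonnegative, so `f + ⟪w, g ·⟫` is convex, and minimality of `y(t + 1)` for this function plus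
`α‖· - y t‖²` gives the three-point inequality against the feasible `x*`, where `⟪w, g x*⟫ ≤ 0`.
Combined with the drift bound `‖Q(t + 1)‖² ≤ ‖Q(t) + g(y(t + 1))‖² + ‖g(y(t + 1))‖²` and with
`‖g(y(t + 1)) - g(y t)‖² ≤ β²‖y(t + 1) - y t‖² ≤ 2α‖y(t + 1) - y t‖²`, this says that
`f(y(t + 1)) - f(x*)` is bounded by the decrease of
`V t = ‖Q t‖²/2 - ‖g(y t)‖²/2 + α‖x* - y t‖²`. Telescoping, `V 0 ≤ α‖x* - x(-1)‖²` because
`|Q(0)| ≤ |g(x(-1))|`, and `V t ≥ 0` for `t ≥ 1` because `|g(y t)| ≤ Q(t)`; Jensen's inequality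
finishes the proof.
-/

open scoped RealInnerProductSpace
open Finset Filter Topology

lemma le_zero_of_forall_le_mul {a N : ℝ} (h : ∀ l : ℝ, 0 < l → l ≤ 1 → a ≤ l * N) : a ≤ 0 := by
  have hlim : Tendsto (fun l : ℝ => l * N) (𝓝[>] 0) (𝓝 (0 * N)) :=
    (tendsto_id.mono_left nhdsWithin_le_nhds).mul_const N
  rw [zero_mul] at hlim
  exact ge_of_tendsto hlim (eventually_of_mem (Ioc_mem_nhdsGT one_pos) fun l hl => h l hl.1 hl.2)

section InnerProductSpace

variable {E : Type*} [NormedAddCommGroup E] [InnerProductSpace ℝ E]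

lemma norm_sub_smul_add_smul_sq (a b : E) (l : ℝ) :
    ‖(1 - l) • a + l • b‖ ^ 2 = (1 - l) * ‖a‖ ^ 2 + l * ‖b‖ ^ 2 - l * (1 - l) * ‖a - b‖ ^ 2 := by
  simp only [← real_inner_self_eq_norm_sq, inner_add_left, inner_add_right, inner_sub_left,
    inner_sub_right, real_inner_smul_left, real_inner_smul_right, real_inner_comm a b]
  ring

/-- The three-point inequality of proximal methods. -/
theorem ConvexOn.three_point_of_isMinOn {X : Set E} {h : E → ℝ} (hh : ConvexOn ℝ X h) {α : ℝ}
    {c x z : E} (hx : x ∈ X) (hz : z ∈ X)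
    (hmin : IsMinOn (fun y => h y + α * ‖y - c‖ ^ 2) X x) :
    h x + α * ‖x - c‖ ^ 2 + α * ‖z - x‖ ^ 2 ≤ h z + α * ‖z - c‖ ^ 2 := by
  suffices ∀ l : ℝ, 0 < l → l ≤ 1 →
      h x + α * ‖x - c‖ ^ 2 + α * ‖z - x‖ ^ 2 - (h z + α * ‖z - c‖ ^ 2) ≤ l * (α * ‖z - x‖ ^ 2) by
    linarith [le_zero_of_forall_le_mul this]
  -- test the minimality of `x` at `(1 - l) • x + l • z`, then let `l → 0`
  intro l hl hl1
  have hy : (1 - l) • x + l • z ∈ X := hh.1 hx hz (by linarith) hl.le (by ring)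
  have hconv := hh.2 hx hz (by linarith : 0 ≤ 1 - l) hl.le (by ring)
  have hnorm : ‖(1 - l) • x + l • z - c‖ ^ 2
      = (1 - l) * ‖x - c‖ ^ 2 + l * ‖z - c‖ ^ 2 - l * (1 - l) * ‖z - x‖ ^ 2 := by
    rw [show (1 - l) • x + l • z - c = (1 - l) • (x - c) + l • (z - c) by module,
      norm_sub_smul_add_smul_sq, sub_sub_sub_cancel_right, norm_sub_rev x z]
  have hle := isMinOn_iff.1 hmin _ hy
  simp only [smul_eq_mul, hnorm] at hle hconv
  nlinarith

end InnerProductSpace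

lemma ConvexOn.map_inv_smul_sum_range_le {E : Type*} [AddCommGroup E] [Module ℝ E] {X : Set E}
    {f : E → ℝ} (hf : ConvexOn ℝ X f) {p : ℕ → E} (hp : ∀ τ, p τ ∈ X) {t : ℕ} (ht : 0 < t) :
    f ((t : ℝ)⁻¹ • ∑ τ ∈ range t, p τ) ≤ (t : ℝ)⁻¹ * ∑ τ ∈ range t, f (p τ) := by
  have hw : ∑ _τ ∈ range t, (t : ℝ)⁻¹ = 1 := by
    rw [sum_const, card_range, nsmul_eq_mul, mul_inv_cancel₀ (by positivity)]
  simpa only [smul_sum, mul_sum, smul_eq_mul] using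
    hf.map_sum_le (fun _ _ => by positivity) hw fun τ _ => hp τ

lemma sum_range_le_of_le_add_sub {a P : ℕ → ℝ} {c : ℝ} (h : ∀ t, a t + P (t + 1) ≤ c + P t)
    (t : ℕ) : ∑ τ ∈ range t, a τ ≤ t * c + (P 0 - P t) := by
  induction t with
  | zero => simp
  | succ t ih => rw [sum_range_succ]; push_cast; linarith [h t]

lemma max_neg_add_sq_le (a b : ℝ) : max (-a) (b + a) ^ 2 ≤ (b + a) ^ 2 + a ^ 2 := by
  rcases max_cases (-a) (b + a) with ⟨h, _⟩ | ⟨h, _⟩ <;> rw [h] <;> nlinarith [sq_nonneg a]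

section EuclideanSpace

variable {ι : Type*}

lemma EuclideanSpace.norm_le_norm_of_abs_le [Fintype ι] {u w : EuclideanSpace ℝ ι}
    (h : ∀ k, |u k| ≤ |w k|) : ‖u‖ ≤ ‖w‖ := by
  simp only [EuclideanSpace.norm_eq, Real.norm_eq_abs]
  exact Real.sqrt_le_sqrt (sum_le_sum fun k _ => pow_le_pow_left₀ (abs_nonneg _) (h k) 2)

lemma convexOn_inner_of_nonneg [Fintype ι] {E : Type*} [AddCommGroup E] [Module ℝ E]
    {X : Set E} (hX : Convex ℝ X) {g : E → EuclideanSpace ℝ ι}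
    (hg : ∀ k, ConvexOn ℝ X fun z => g z k) {w : EuclideanSpace ℝ ι} (hw : ∀ k, 0 ≤ w k) :
    ConvexOn ℝ X fun z => ⟪w, g z⟫ := by
  refine ⟨hX, fun u hu v hv a b ha hb hab => ?_⟩
  have hsum := sum_le_sum fun k (_ : k ∈ univ) =>
    mul_le_mul_of_nonneg_right ((hg k).2 hu hv ha hb hab) (hw k)
  simp only [smul_eq_mul, add_mul, sum_add_distrib, mul_assoc, ← mul_sum] at hsum
  simpa only [smul_eq_mul, PiLp.inner_apply, RCLike.inner_apply, conj_trivial] using hsum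

structure IsVirtualQueue (v Q : ℕ → EuclideanSpace ℝ ι) : Prop where
  zero : ∀ k, Q 0 k = max 0 (-v 0 k)
  succ : ∀ t k, Q (t + 1) k = max (-v (t + 1) k) (Q t k + v (t + 1) k)

namespace IsVirtualQueue

variable {v Q : ℕ → EuclideanSpace ℝ ι}

lemma nonneg (hQ : IsVirtualQueue v Q) (t : ℕ) (k : ι) : 0 ≤ Q t k := by
  induction t with
  | zero => rw [hQ.zero]; exact le_max_left _ _
  | succ t ih => rw [hQ.succ]; linarith [le_max_left (-v (t + 1) k) (Q t k + v (t + 1) k),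
      le_max_right (-v (t + 1) k) (Q t k + v (t + 1) k)]

lemma add_nonneg (hQ : IsVirtualQueue v Q) (t : ℕ) (k : ι) : 0 ≤ Q t k + v t k := by
  cases t with
  | zero => rw [hQ.zero]; linarith [le_max_right 0 (-v 0 k)]
  | succ t => rw [hQ.succ]; linarith [le_max_left (-v (t + 1) k) (Q t k + v (t + 1) k)]

variable [Fintype ι]

lemma norm_zero_le (hQ : IsVirtualQueue v Q) : ‖Q 0‖ ≤ ‖v 0‖ := by
  refine EuclideanSpace.norm_le_norm_of_abs_le fun k => ?_
  rw [abs_of_nonneg (hQ.nonneg 0 k), hQ.zero]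
  exact max_le (abs_nonneg _) (neg_le_abs _)

lemma norm_le_norm_succ (hQ : IsVirtualQueue v Q) (t : ℕ) : ‖v (t + 1)‖ ≤ ‖Q (t + 1)‖ := by
  refine EuclideanSpace.norm_le_norm_of_abs_le fun k => ?_
  rw [abs_of_nonneg (hQ.nonneg (t + 1) k), hQ.succ, abs_le']
  constructor
  · linarith [hQ.nonneg t k, le_max_right (-v (t + 1) k) (Q t k + v (t + 1) k)]
  · exact le_max_left _ _

lemma norm_succ_sq_le (hQ : IsVirtualQueue v Q) (t : ℕ) :
    ‖Q (t + 1)‖ ^ 2 ≤ ‖Q t + v (t + 1)‖ ^ 2 + ‖v (t + 1)‖ ^ 2 := by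
  simp only [EuclideanSpace.norm_sq_eq, Real.norm_eq_abs, sq_abs, ← sum_add_distrib]
  refine sum_le_sum fun k _ => ?_
  rw [hQ.succ, PiLp.add_apply]
  exact max_neg_add_sq_le _ _

end IsVirtualQueue

variable [Fintype ι] {E : Type*} [NormedAddCommGroup E]

/-- A run of Algorithm 1, reindexed so that `y t` is the paper's iterate `x(t - 1)`. -/
structure IsAlg1Run (X : Set E) (f : E → ℝ) (g : E → EuclideanSpace ℝ ι) (α : ℝ)
    (y : ℕ → E) (Q : ℕ → EuclideanSpace ℝ ι) : Prop where
  mem : ∀ t, y t ∈ X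
  queue : IsVirtualQueue (fun t => g (y t)) Q
  isMinOn : ∀ t,
    IsMinOn (fun z => f z + ⟪Q t + g (y t), g z⟫ + α * ‖z - y t‖ ^ 2) X (y (t + 1))

noncomputable def lyapunov (α : ℝ) (g : E → EuclideanSpace ℝ ι) (xs : E) (y : ℕ → E)
    (Q : ℕ → EuclideanSpace ℝ ι) (t : ℕ) : ℝ :=
  ‖Q t‖ ^ 2 / 2 - ‖g (y t)‖ ^ 2 / 2 + α * ‖xs - y t‖ ^ 2

namespace IsAlg1Run

variable {X : Set E} {f : E → ℝ} {g : E → EuclideanSpace ℝ ι} {α β : ℝ} {y : ℕ → E}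
  {Q : ℕ → EuclideanSpace ℝ ι} {xs : E}

lemma lyapunov_zero_le (hrun : IsAlg1Run X f g α y Q) :
    lyapunov α g xs y Q 0 ≤ α * ‖xs - y 0‖ ^ 2 := by
  have := pow_le_pow_left₀ (norm_nonneg _) hrun.queue.norm_zero_le 2
  unfold lyapunov
  linarith

lemma lyapunov_succ_nonneg (hrun : IsAlg1Run X f g α y Q) (hα : 0 ≤ α) (t : ℕ) :
    0 ≤ lyapunov α g xs y Q (t + 1) := by
  have := pow_le_pow_left₀ (norm_nonneg _) (hrun.queue.norm_le_norm_succ t) 2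
  unfold lyapunov
  nlinarith [sq_nonneg ‖xs - y (t + 1)‖]

variable [InnerProductSpace ℝ E]

theorem lyapunov_step (hrun : IsAlg1Run X f g α y Q) (hX : Convex ℝ X) (hf : ConvexOn ℝ X f)
    (hg : ∀ k, ConvexOn ℝ X fun z => g z k) (hLip : ∀ u ∈ X, ∀ v ∈ X, ‖g u - g v‖ ≤ β * ‖u - v‖)
    (hα : β ^ 2 / 2 ≤ α) (hxs : xs ∈ X) (hfeas : ∀ k, g xs k ≤ 0) (t : ℕ) :
    f (y (t + 1)) + lyapunov α g xs y Q (t + 1) ≤ f xs + lyapunov α g xs y Q t := by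
  have hw : ∀ k, 0 ≤ (Q t + g (y t)) k := hrun.queue.add_nonneg t
  have hthree := (hf.add (convexOn_inner_of_nonneg hX hg hw)).three_point_of_isMinOn
    (hrun.mem (t + 1)) hxs (hrun.isMinOn t)
  have hfeas' : ⟪Q t + g (y t), g xs⟫ ≤ 0 := by
    simp only [PiLp.inner_apply, RCLike.inner_apply, conj_trivial]
    exact sum_nonpos fun k _ => mul_nonpos_of_nonpos_of_nonneg (hfeas k) (hw k)
  have hLip' : ‖g (y (t + 1)) - g (y t)‖ ^ 2 ≤ 2 * α * ‖y (t + 1) - y t‖ ^ 2 := by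
    have := pow_le_pow_left₀ (norm_nonneg _) (hLip _ (hrun.mem (t + 1)) _ (hrun.mem t)) 2
    nlinarith [sq_nonneg ‖y (t + 1) - y t‖]
  have hdrift := hrun.queue.norm_succ_sq_le t
  simp only [Pi.add_apply] at hthree
  rw [norm_add_sq_real] at hdrift
  rw [norm_sub_sq_real, real_inner_comm] at hLip'
  rw [inner_add_left (Q t) (g (y t)) (g (y (t + 1)))] at hthree
  unfold lyapunov
  linarith

theorem map_inv_smul_sum_range_le (hrun : IsAlg1Run X f g α y Q) (hX : Convex ℝ X)
    (hf : ConvexOn ℝ X f) (hg : ∀ k, ConvexOn ℝ X fun z => g z k)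
    (hLip : ∀ u ∈ X, ∀ v ∈ X, ‖g u - g v‖ ≤ β * ‖u - v‖) (hα : β ^ 2 / 2 ≤ α) (hxs : xs ∈ X)
    (hfeas : ∀ k, g xs k ≤ 0) {t : ℕ} (ht : 0 < t) :
    f ((t : ℝ)⁻¹ • ∑ τ ∈ range t, y (τ + 1)) ≤ f xs + α / t * ‖xs - y 0‖ ^ 2 := by
  obtain ⟨s, rfl⟩ : ∃ s, t = s + 1 := ⟨t - 1, by omega⟩
  have hsum := sum_range_le_of_le_add_sub (hrun.lyapunov_step hX hf hg hLip hα hxs hfeas) (s + 1)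
  have h0 := hrun.lyapunov_zero_le (xs := xs)
  have h1 := hrun.lyapunov_succ_nonneg (xs := xs) (le_trans (by positivity) hα) s
  calc f (((s + 1 : ℕ) : ℝ)⁻¹ • ∑ τ ∈ range (s + 1), y (τ + 1))
      ≤ ((s + 1 : ℕ) : ℝ)⁻¹ * ∑ τ ∈ range (s + 1), f (y (τ + 1)) :=
        hf.map_inv_smul_sum_range_le (fun τ => hrun.mem (τ + 1)) ht
    _ ≤ ((s + 1 : ℕ) : ℝ)⁻¹ * ((s + 1 : ℕ) * f xs + α * ‖xs - y 0‖ ^ 2) := by gcongr; linarith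
    _ = f xs + α / (s + 1 : ℕ) * ‖xs - y 0‖ ^ 2 := by field_simp

end IsAlg1Run

end EuclideanSpace

theorem alg1_objective_value_violation_general
    {n m : ℕ}
    (X : Set (EuclideanSpace ℝ (Fin n))) (hXconv : Convex ℝ X)
    (f : EuclideanSpace ℝ (Fin n) → ℝ) (hf : ConvexOn ℝ X f)
    (g : EuclideanSpace ℝ (Fin n) → EuclideanSpace ℝ (Fin m))
    (hg : ∀ k : Fin m, ConvexOn ℝ X (fun z => g z k))
    (β : ℝ) (hLip : ∀ u ∈ X, ∀ v ∈ X, ‖g u - g v‖ ≤ β * ‖u - v‖)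
    (α : ℝ) (hα : β ^ 2 / 2 ≤ α)
    (x : ℤ → EuclideanSpace ℝ (Fin n)) (hxm1 : x (-1) ∈ X)
    (Q : ℕ → EuclideanSpace ℝ (Fin m))
    (hQ0 : ∀ k : Fin m, Q 0 k = max 0 (-(g (x (-1)) k)))
    (hxmem : ∀ t : ℕ, x t ∈ X)
    (hmin : ∀ t : ℕ, ∀ z ∈ X,
      f (x t) + ⟪Q t + g (x ((t : ℤ) - 1)), g (x t)⟫ + α * ‖x t - x ((t : ℤ) - 1)‖ ^ 2 ≤
        f z + ⟪Q t + g (x ((t : ℤ) - 1)), g z⟫ + α * ‖z - x ((t : ℤ) - 1)‖ ^ 2)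
    (hQrec : ∀ (t : ℕ) (k : Fin m),
      Q (t + 1) k = max (-(g (x t) k)) (Q t k + g (x t) k))
    (xs : EuclideanSpace ℝ (Fin n)) (hxs : xs ∈ X)
    (hfeas : ∀ k : Fin m, g xs k ≤ 0)
    :
    ∀ t : ℕ, 1 ≤ t → f ((t : ℝ)⁻¹ • ∑ τ ∈ Finset.range t, x τ) ≤ f xs + (α / t) * ‖xs - x (-1)‖ ^ 2 := by
  intro t ht
  set y : ℕ → EuclideanSpace ℝ (Fin n) := fun τ => x ((τ : ℤ) - 1)
  have hy0 : y 0 = x (-1) := by simp [y]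
  have hy : ∀ τ : ℕ, y (τ + 1) = x τ := fun τ => by simp [y]
  have hrun : IsAlg1Run X f g α y Q :=
    { mem := fun τ => by cases τ with
        | zero => rwa [hy0]
        | succ τ => rw [hy]; exact hxmem τ
      queue := ⟨fun k => by simpa only [hy0] using hQ0 k,
        fun τ k => by simpa only [hy] using hQrec τ k⟩
      isMinOn := fun τ => isMinOn_iff.2 fun z hz => by rw [hy]; exact hmin τ z hz }
  simpa only [hy, hy0] using hrun.map_inv_smul_sum_range_le hXconv hf hg hLip hα hxs hfeas ht

theorem alg1_objective_value_violation
    {n m : ℕ}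
    (X : Set (EuclideanSpace ℝ (Fin n))) (hXconv : Convex ℝ X) (hXcl : IsClosed X)
    (f : EuclideanSpace ℝ (Fin n) → ℝ) (hf : ConvexOn ℝ X f) (hfc : ContinuousOn f X)
    (g : EuclideanSpace ℝ (Fin n) → EuclideanSpace ℝ (Fin m))
    (hg : ∀ k : Fin m, ConvexOn ℝ X (fun z => g z k))
    (β : ℝ) (hLip : ∀ u ∈ X, ∀ v ∈ X, ‖g u - g v‖ ≤ β * ‖u - v‖)
    (α : ℝ) (hα : β ^ 2 / 2 ≤ α)
    (x : ℤ → EuclideanSpace ℝ (Fin n)) (hxm1 : x (-1) ∈ X)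
    (Q : ℕ → EuclideanSpace ℝ (Fin m))
    (hQ0 : ∀ k : Fin m, Q 0 k = max 0 (-(g (x (-1)) k)))
    (hxmem : ∀ t : ℕ, x t ∈ X)
    (hmin : ∀ t : ℕ, ∀ z ∈ X,
      f (x t) + ⟪Q t + g (x ((t : ℤ) - 1)), g (x t)⟫ + α * ‖x t - x ((t : ℤ) - 1)‖ ^ 2 ≤
        f z + ⟪Q t + g (x ((t : ℤ) - 1)), g z⟫ + α * ‖z - x ((t : ℤ) - 1)‖ ^ 2)
    (hQrec : ∀ (t : ℕ) (k : Fin m),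
      Q (t + 1) k = max (-(g (x t) k)) (Q t k + g (x t) k))
    (xs : EuclideanSpace ℝ (Fin n)) (hxs : xs ∈ X)
    (hfeas : ∀ k : Fin m, g xs k ≤ 0)
    (hopt : ∀ z ∈ X, (∀ k : Fin m, g z k ≤ 0) → f xs ≤ f z)
    :
    ∀ t : ℕ, 1 ≤ t → f ((t : ℝ)⁻¹ • ∑ τ ∈ Finset.range t, x τ) ≤ f xs + (α / t) * ‖xs - x (-1)‖ ^ 2 :=
  alg1_objective_value_violation_general X hXconv f hf g hg β hLip α hα x hxm1 Q hQ0 hxmem hmin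
    hQrec xs hxs hfeas
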